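/- In the upper-triangular array setting, the derivative of the post-array block R12 satisfies (R12)'(θ₀) = (𝓛ᵀ − 𝓛) · R12(θ₀) + (R11(θ₀))⁻ᵀ · Yᵀ · R22(θ₀) + N, where 𝓛 is the strictly lower-triangular part of X · R11(θ₀)⁻¹ and (R11(θ₀))⁻ᵀ denotes the transpose of the inverse of R11(θ₀). -/

import Mathlib

open Matrix

/-- Strictly lower-triangular part of a square matrix. -/
noncomputable def strictLowerPart {s : ℕ} (M : Matrix (Fin s) (Fin s) ℝ) :
    Matrix (Fin s) (Fin s) ℝ :=
  Matrix.of fun i j => if j < i then M i j else 0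

/-- Diagonal part of a square matrix. -/
noncomputable def diagPart {s : ℕ} (M : Matrix (Fin s) (Fin s) ℝ) :
    Matrix (Fin s) (Fin s) ℝ :=
  Matrix.of fun i j => if i = j then M i j else 0

/-- Strictly upper-triangular part of a square matrix. -/
noncomputable def strictUpperPart {s : ℕ} (M : Matrix (Fin s) (Fin s) ℝ) :
    Matrix (Fin s) (Fin s) ℝ :=
  Matrix.of fun i j => if i < j then M i j else 0

/-!
Differentiating `Q Qᵀ = 1` shows that `Ω = Q' Qᵀ` is skew-symmetric, and differentiating
`Q A = R` gives `R' = Ω R + Q A'`. Read blockwise, the zero `(2,1)` block of `R` gives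
`Ω₂₁ = -Y R₁₁⁻¹`, hence `Ω₁₂ = -Ω₂₁ᵀ = R₁₁⁻ᵀ Yᵀ`; the `(1,1)` block gives
`X R₁₁⁻¹ = R₁₁' R₁₁⁻¹ - Ω₁₁` with `R₁₁' R₁₁⁻¹` upper triangular, so the strictly lower part `𝓛`
of `X R₁₁⁻¹` is that of `-Ω₁₁`, and skew-symmetry gives `Ω₁₁ = 𝓛ᵀ - 𝓛`. The `(1,2)` block is
then `R₁₂' = Ω₁₁ R₁₂ + Ω₁₂ R₂₂ + N`.
-/

section EntrywiseDeriv

variable {𝕜 : Type*} [NontriviallyNormedField 𝕜] {m n p o : Type*}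

def HasEntrywiseDerivAt (F : 𝕜 → Matrix m n 𝕜) (F' : Matrix m n 𝕜) (x : 𝕜) : Prop :=
  ∀ i j, HasDerivAt (fun t => F t i j) (F' i j) x

theorem hasEntrywiseDerivAt_const (M : Matrix m n 𝕜) (x : 𝕜) :
    HasEntrywiseDerivAt (fun _ => M) 0 x :=
  fun _ _ => hasDerivAt_const _ _

namespace HasEntrywiseDerivAt

variable {F : 𝕜 → Matrix m n 𝕜} {F' : Matrix m n 𝕜} {x : 𝕜}

theorem unique {F'' : Matrix m n 𝕜} (h : HasEntrywiseDerivAt F F' x)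
    (h' : HasEntrywiseDerivAt F F'' x) : F' = F'' :=
  Matrix.ext fun i j => (h i j).unique (h' i j)

theorem transpose (h : HasEntrywiseDerivAt F F' x) :
    HasEntrywiseDerivAt (fun t => (F t)ᵀ) F'ᵀ x :=
  fun i j => h j i

theorem mul [Fintype n] {G : 𝕜 → Matrix n p 𝕜} {G' : Matrix n p 𝕜}
    (hF : HasEntrywiseDerivAt F F' x) (hG : HasEntrywiseDerivAt G G' x) :
    HasEntrywiseDerivAt (fun t => F t * G t) (F' * G x + F x * G') x := by
  intro i j
  simp only [Matrix.mul_apply, Matrix.add_apply, ← Finset.sum_add_distrib]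
  exact HasDerivAt.fun_sum fun k _ => (hF i k).mul (hG k j)

theorem blockTriangular {α : Type*} [LT α] {b : m → α} {F : 𝕜 → Matrix m m 𝕜}
    {F' : Matrix m m 𝕜} (h : HasEntrywiseDerivAt F F' x) (hF : ∀ t, (F t).BlockTriangular b) :
    F'.BlockTriangular b := fun i j hij =>
  (h i j).unique (by simpa only [hF _ hij] using hasDerivAt_const x (0 : 𝕜))

end HasEntrywiseDerivAt

theorem hasEntrywiseDerivAt_fromBlocks_iff
    {A : 𝕜 → Matrix o m 𝕜} {B : 𝕜 → Matrix o n 𝕜} {C : 𝕜 → Matrix p m 𝕜}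
    {D : 𝕜 → Matrix p n 𝕜} {A' : Matrix o m 𝕜} {B' : Matrix o n 𝕜} {C' : Matrix p m 𝕜}
    {D' : Matrix p n 𝕜} {x : 𝕜} :
    HasEntrywiseDerivAt (fun t => fromBlocks (A t) (B t) (C t) (D t)) (fromBlocks A' B' C' D') x ↔
      HasEntrywiseDerivAt A A' x ∧ HasEntrywiseDerivAt B B' x ∧
        HasEntrywiseDerivAt C C' x ∧ HasEntrywiseDerivAt D D' x := by
  refine ⟨fun h => ⟨fun i j => h (.inl i) (.inl j), fun i j => h (.inl i) (.inr j),
    fun i j => h (.inr i) (.inl j), fun i j => h (.inr i) (.inr j)⟩, ?_⟩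
  rintro ⟨hA, hB, hC, hD⟩ (i | i) (j | j)
  exacts [hA i j, hB i j, hC i j, hD i j]

theorem HasEntrywiseDerivAt.transpose_eq_neg_of_mul_transpose_eq_one [Fintype m] [DecidableEq m]
    {Q : 𝕜 → Matrix m m 𝕜} {Q' : Matrix m m 𝕜} {x : 𝕜} (hQ : HasEntrywiseDerivAt Q Q' x)
    (horth : ∀ t, Q t * (Q t)ᵀ = 1) : (Q' * (Q x)ᵀ)ᵀ = -(Q' * (Q x)ᵀ) := by
  have hderiv := hQ.mul hQ.transpose
  simp only [horth] at hderiv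
  have hzero := hderiv.unique (hasEntrywiseDerivAt_const (1 : Matrix m m 𝕜) x)
  rw [← transpose_transpose (Q x * Q'ᵀ), transpose_mul, transpose_transpose] at hzero
  exact eq_neg_of_add_eq_zero_right hzero

end EntrywiseDeriv

section StrictLowerPart

variable {s : ℕ}

theorem strictLowerPart_add_of_blockTriangular {U : Matrix (Fin s) (Fin s) ℝ}
    (hU : U.BlockTriangular id) (M : Matrix (Fin s) (Fin s) ℝ) :
    strictLowerPart (U + M) = strictLowerPart M := by
  ext i j
  by_cases hij : j < i
  · simp [strictLowerPart, hij, hU hij]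
  · simp [strictLowerPart, hij]

theorem transpose_sub_strictLowerPart_neg_of_transpose_eq_neg {Ω : Matrix (Fin s) (Fin s) ℝ}
    (hΩ : Ωᵀ = -Ω) : (strictLowerPart (-Ω))ᵀ - strictLowerPart (-Ω) = Ω := by
  have hskew : ∀ i j, Ω j i = -Ω i j := fun i j => congrFun (congrFun hΩ i) j
  ext i j
  rcases lt_trichotomy i j with hij | rfl | hij
  · simp [strictLowerPart, hij, hij.not_gt, hskew i j]
  · rw [Matrix.sub_apply, transpose_apply, sub_self]
    linarith [hskew i i]
  · simp [strictLowerPart, hij, hij.not_gt]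

theorem eq_transpose_sub_strictLowerPart_mul_inv {Ω R X : Matrix (Fin s) (Fin s) ℝ}
    (hΩ : Ωᵀ = -Ω) (hR : IsUnit R) (hRtri : R.BlockTriangular id)
    (hderiv : (Ω * R + X).BlockTriangular id) :
    Ω = (strictLowerPart (X * R⁻¹))ᵀ - strictLowerPart (X * R⁻¹) := by
  have : Invertible R := hR.invertible
  have hX : X * R⁻¹ = (Ω * R + X) * R⁻¹ + -Ω := by
    rw [Matrix.add_mul, Matrix.mul_inv_cancel_right_of_invertible]
    abel
  have hupper : ((Ω * R + X) * R⁻¹).BlockTriangular id :=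
    hderiv.mul (blockTriangular_inv_of_blockTriangular hRtri)
  rw [hX, strictLowerPart_add_of_blockTriangular hupper,
    transpose_sub_strictLowerPart_neg_of_transpose_eq_neg hΩ]

end StrictLowerPart

theorem Matrix.transpose_eq_neg_of_fromBlocks {l m α : Type*} [Ring α]
    {A : Matrix l l α} {B : Matrix l m α} {C : Matrix m l α} {D : Matrix m m α}
    (h : (fromBlocks A B C D)ᵀ = -fromBlocks A B C D) : Aᵀ = -A ∧ B = -Cᵀ := by
  rw [fromBlocks_transpose, fromBlocks_neg, fromBlocks_inj] at h
  obtain ⟨hA, hC, -, -⟩ := h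
  exact ⟨hA, by rw [hC, neg_neg]⟩

theorem upperTriangularCase_R12_deriv_general
    (s k l : ℕ)
    (A A' : ℝ → Matrix (Fin s ⊕ Fin k) (Fin s ⊕ Fin l) ℝ)
    (Q Q' : ℝ → Matrix (Fin s ⊕ Fin k) (Fin s ⊕ Fin k) ℝ)
    (hA : ∀ θ i j, HasDerivAt (fun t => A t i j) (A' θ i j) θ)
    (hQ : ∀ θ i j, HasDerivAt (fun t => Q t i j) (Q' θ i j) θ)
    (hQorth : ∀ θ, Q θ * (Q θ)ᵀ = 1)
    (R11 : ℝ → Matrix (Fin s) (Fin s) ℝ)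
    (R12 : ℝ → Matrix (Fin s) (Fin l) ℝ)
    (R22 : ℝ → Matrix (Fin k) (Fin l) ℝ)
    (hblock : ∀ θ, Q θ * A θ = Matrix.fromBlocks (R11 θ) (R12 θ) 0 (R22 θ))
    (hupp : ∀ θ (i j : Fin s), j < i → R11 θ i j = 0)
    (hinv : ∀ θ, IsUnit (R11 θ))
    (θ₀ : ℝ)
    (X : Matrix (Fin s) (Fin s) ℝ) (N : Matrix (Fin s) (Fin l) ℝ)
    (Y : Matrix (Fin k) (Fin s) ℝ) (V : Matrix (Fin k) (Fin l) ℝ)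
    (hXNYV : Q θ₀ * A' θ₀ = Matrix.fromBlocks X N Y V)
    (R12' : Matrix (Fin s) (Fin l) ℝ)
    (hR12' : ∀ i j, HasDerivAt (fun t => R12 t i j) (R12' i j) θ₀) :
    R12' = ((strictLowerPart (X * (R11 θ₀)⁻¹))ᵀ - strictLowerPart (X * (R11 θ₀)⁻¹)) * R12 θ₀
      + ((R11 θ₀)⁻¹)ᵀ * Yᵀ * R22 θ₀ + N := by
  have hQ₀ : HasEntrywiseDerivAt Q (Q' θ₀) θ₀ := hQ θ₀
  set Ω := Q' θ₀ * (Q θ₀)ᵀ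
  have hΩ : Ωᵀ = -Ω := hQ₀.transpose_eq_neg_of_mul_transpose_eq_one hQorth
  have hQ'A : Q' θ₀ * A θ₀ = Ω * (Q θ₀ * A θ₀) := by
    rw [← Matrix.mul_assoc, Matrix.mul_assoc (Q' θ₀), mul_eq_one_comm.mp (hQorth θ₀),
      Matrix.mul_one]
  have hR : HasEntrywiseDerivAt (fun t => fromBlocks (R11 t) (R12 t) 0 (R22 t))
      (Ω * fromBlocks (R11 θ₀) (R12 θ₀) 0 (R22 θ₀) + fromBlocks X N Y V) θ₀ := by
    simpa only [← hblock, hQ'A, hXNYV] using hQ₀.mul (hA θ₀)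
  rw [← fromBlocks_toBlocks Ω] at hR hΩ
  rw [fromBlocks_multiply, fromBlocks_add] at hR
  obtain ⟨hR11, hR12, hR21, -⟩ := hasEntrywiseDerivAt_fromBlocks_iff.mp hR
  obtain ⟨hΩ₁₁, hΩ₁₂⟩ := Matrix.transpose_eq_neg_of_fromBlocks hΩ
  have hY : Ω.toBlocks₂₁ * R11 θ₀ + Y = 0 := by
    simpa using hR21.unique (hasEntrywiseDerivAt_const 0 θ₀)
  have hupper (θ) : (R11 θ).BlockTriangular id := fun i j hij => hupp θ i j hij
  have hL := eq_transpose_sub_strictLowerPart_mul_inv hΩ₁₁ (hinv θ₀) (hupper θ₀)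
    (by simpa using hR11.blockTriangular hupper)
  have : Invertible (R11 θ₀) := (hinv θ₀).invertible
  have hΩ₂₁ : Ω.toBlocks₂₁ = -(Y * (R11 θ₀)⁻¹) := by
    rw [← Matrix.neg_mul, ← eq_neg_of_add_eq_zero_left hY,
      Matrix.mul_inv_cancel_right_of_invertible]
  rw [HasEntrywiseDerivAt.unique hR12' (by simpa using hR12), ← hL, hΩ₁₂, hΩ₂₁,
    transpose_neg, neg_neg, transpose_mul, Matrix.mul_assoc]

/-- Upper triangular array case: the derivative of the post-array block R12 satisfies
`(R12)' = (𝓛ᵀ − 𝓛) * R12 + R11⁻ᵀ * Yᵀ * R22 + N`, where `𝓛` is the strictly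
lower-triangular part of `X * R11⁻¹`. -/
theorem upperTriangularCase_R12_deriv
    (s k l : ℕ) (hs : 0 < s)
    (A A' : ℝ → Matrix (Fin s ⊕ Fin k) (Fin s ⊕ Fin l) ℝ)
    (Q Q' : ℝ → Matrix (Fin s ⊕ Fin k) (Fin s ⊕ Fin k) ℝ)
    (hA : ∀ θ i j, HasDerivAt (fun t => A t i j) (A' θ i j) θ)
    (hQ : ∀ θ i j, HasDerivAt (fun t => Q t i j) (Q' θ i j) θ)
    (hQorth : ∀ θ, Q θ * (Q θ)ᵀ = 1)
    (R11 : ℝ → Matrix (Fin s) (Fin s) ℝ)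
    (R12 : ℝ → Matrix (Fin s) (Fin l) ℝ)
    (R22 : ℝ → Matrix (Fin k) (Fin l) ℝ)
    (hblock : ∀ θ, Q θ * A θ = Matrix.fromBlocks (R11 θ) (R12 θ) 0 (R22 θ))
    (hupp : ∀ θ (i j : Fin s), j < i → R11 θ i j = 0)
    (hinv : ∀ θ, IsUnit (R11 θ))
    (θ₀ : ℝ)
    (X : Matrix (Fin s) (Fin s) ℝ) (N : Matrix (Fin s) (Fin l) ℝ)
    (Y : Matrix (Fin k) (Fin s) ℝ) (V : Matrix (Fin k) (Fin l) ℝ)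
    (hXNYV : Q θ₀ * A' θ₀ = Matrix.fromBlocks X N Y V)
    (R12' : Matrix (Fin s) (Fin l) ℝ)
    (hR12' : ∀ i j, HasDerivAt (fun t => R12 t i j) (R12' i j) θ₀) :
    R12' = ((strictLowerPart (X * (R11 θ₀)⁻¹))ᵀ - strictLowerPart (X * (R11 θ₀)⁻¹)) * R12 θ₀
      + ((R11 θ₀)⁻¹)ᵀ * Yᵀ * R22 θ₀ + N :=
  upperTriangularCase_R12_deriv_general s k l A A' Q Q' hA hQ hQorth R11 R12 R22 hblock hupp hinv θ₀
    X N Y V hXNYV R12' hR12'
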